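/- arXiv:2107.02796 — 6 statements merged into one kernel-verified Lean document; each statement's English description precedes it below -/
import Mathlib

section
/- In a cycle graph C_n on n ≥ 3 vertices, the minimum cardinality of a double dominating set (a set S such that every vertex has at least two vertices of its closed neighborhood in S) equals ⌈2n/3⌉. -/
open SimpleGraph

/-- `S` is a double dominating set of `G`: every vertex has at least two
vertices of its closed neighborhood in `S`. -/
def IsDoubleDomSet {V : Type*} [Fintype V] [DecidableEq V]
    (G : SimpleGraph V) [DecidableRel G.Adj] (S : Finset V) : Prop :=
  ∀ v : V, 2 ≤ (S ∩ insert v (G.neighborFinset v)).card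

/-- The double domination number `γ×2(G)`. -/
noncomputable def doubleDomNum {V : Type*} [Fintype V] [DecidableEq V]
    (G : SimpleGraph V) [DecidableRel G.Adj] : ℕ :=
  sInf {k | ∃ S : Finset V, IsDoubleDomSet G S ∧ S.card = k}

/-- `H` is a minor of `G`. -/
def HasMinor {V W : Type*} (G : SimpleGraph V) (H : SimpleGraph W) : Prop :=
  ∃ f : W → Set V,
    (∀ w, (f w).Nonempty) ∧
    (∀ w, (G.induce (f w)).Connected) ∧
    (Pairwise fun w₁ w₂ => Disjoint (f w₁) (f w₂)) ∧
    ∀ ⦃w₁ w₂⦄, H.Adj w₁ w₂ → ∃ a ∈ f w₁, ∃ b ∈ f w₂, G.Adj a b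

/-- A graph is outerplanar iff it has no `K₄` minor and no `K_{2,3}` minor. -/
def Outerplanar {V : Type*} (G : SimpleGraph V) : Prop :=
  ¬ HasMinor G (⊤ : SimpleGraph (Fin 4)) ∧
  ¬ HasMinor G (completeBipartiteGraph (Fin 2) (Fin 3))

/-- Maximal outerplanar: outerplanar, and adding any missing edge destroys
outerplanarity. -/
def MaximalOuterplanar {V : Type*} (G : SimpleGraph V) : Prop :=
  Outerplanar G ∧
  ∀ u v : V, u ≠ v → ¬ G.Adj u v →
    ¬ Outerplanar (G ⊔ SimpleGraph.fromEdgeSet {s(u, v)})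

/-- `T` is an internal triangle of `G`: a triangle none of whose edges lies
on any Hamiltonian cycle (for a maximal outerplanar graph on `≥ 4` vertices
the Hamiltonian cycle, i.e. the boundary of the outer face, is unique). -/
def IsInternalTriangle {V : Type*} [DecidableEq V] (G : SimpleGraph V) (T : Finset V) : Prop :=
  ∃ a b c : V, T = {a, b, c} ∧ a ≠ b ∧ a ≠ c ∧ b ≠ c ∧
    G.Adj a b ∧ G.Adj a c ∧ G.Adj b c ∧
    ∀ ⦃v : V⦄ (p : G.Walk v v), p.IsHamiltonianCycle →
      s(a, b) ∉ p.edges ∧ s(a, c) ∉ p.edges ∧ s(b, c) ∉ p.edges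

/-- `IsTwoTreeOn G s`: the induced subgraph of `G` on `s` is a 2-tree,
built from a triangle by repeatedly adding a vertex joined exactly to the
two endpoints of an existing edge. -/
inductive IsTwoTreeOn {V : Type*} [DecidableEq V] (G : SimpleGraph V) :
    Finset V → Prop
  | triangle {a b c : V} : a ≠ b → a ≠ c → b ≠ c →
      G.Adj a b → G.Adj a c → G.Adj b c → IsTwoTreeOn G {a, b, c}
  | grow {s : Finset V} {x y v : V} : IsTwoTreeOn G s → x ∈ s → y ∈ s →
      G.Adj x y → v ∉ s → (∀ u ∈ s, G.Adj v u ↔ u = x ∨ u = y) →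
      IsTwoTreeOn G (insert v s)

/-- `G` is a 2-tree (equivalently, a maximal `K₄`-minor-free graph). -/
def IsTwoTree {V : Type*} [Fintype V] [DecidableEq V] (G : SimpleGraph V) : Prop :=
  IsTwoTreeOn G Finset.univ

lemma range_filter_mod3 (n : ℕ) :
    ((Finset.range n).filter (fun i => i % 3 = 2)).card = n / 3 := by
  induction n with
  | zero => simp
  | succ n ih =>
    rw [Finset.range_add_one, Finset.filter_insert]
    by_cases h : n % 3 = 2
    · rw [if_pos h, Finset.card_insert_of_notMem (by simp), ih]
      omega
    · rw [if_neg h, ih]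
      omega

lemma fin_val_add_one {m : ℕ} (v : Fin (m + 3)) :
    ((v + 1 : Fin (m + 3)) : ℕ) = if (v : ℕ) = m + 2 then 0 else (v : ℕ) + 1 := by
  have h1 : ((1 : Fin (m + 3)) : ℕ) = 1 := rfl
  rw [Fin.val_add, h1]
  split
  · next h => rw [h]; simp
  · next h => exact Nat.mod_eq_of_lt (by have := v.isLt; omega)

lemma fin_val_sub_one {m : ℕ} (v : Fin (m + 3)) :
    ((v - 1 : Fin (m + 3)) : ℕ) = if (v : ℕ) = 0 then m + 2 else (v : ℕ) - 1 := by
  rw [Fin.sub_def]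
  simp only [Fin.val_one]
  split
  · next h => rw [h]; simp [Nat.mod_eq_of_lt]
  · next h =>
    have hv := v.isLt
    have : m + 3 - 1 + (v : ℕ) = ((v : ℕ) - 1) + 1 * (m + 3) := by omega
    rw [this, Nat.add_mul_mod_self_right, Nat.mod_eq_of_lt (by omega)]

/-- In the cycle `Cₙ` on `n ≥ 3` vertices, the double domination
number equals `⌈2n/3⌉` (`= (2n+2)/3` in natural division). -/
theorem doubleDomNum_cycleGraph (n : ℕ) (hn : 3 ≤ n) :
    @doubleDomNum _ _ _ (SimpleGraph.cycleGraph n) (Classical.decRel _) =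
      (2 * n + 2) / 3 := by
  obtain ⟨m, rfl⟩ : ∃ m, n = m + 3 := ⟨n - 3, by omega⟩
  have hc : @doubleDomNum _ _ _ (SimpleGraph.cycleGraph (m + 3)) (Classical.decRel _)
      = doubleDomNum (SimpleGraph.cycleGraph (m + 3)) :=
    congrArg _ (Subsingleton.elim _ _)
  rw [hc]
  set G := SimpleGraph.cycleGraph (m + 3) with hGdef
  -- membership in closed neighborhoods
  have hne : ∀ a b : Fin (m + 3), (a : ℕ) ≠ (b : ℕ) → a ≠ b :=
    fun a b h hab => h (by rw [hab])
  have hmem : ∀ v a : Fin (m + 3),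
      a ∈ insert v (G.neighborFinset v) ↔ a = v ∨ a = v - 1 ∨ a = v + 1 := by
    intro v a
    rw [Finset.mem_insert, SimpleGraph.mem_neighborFinset]
    have hadj : G.Adj v a ↔ v - a = 1 ∨ a - v = 1 := SimpleGraph.cycleGraph_adj
    rw [hadj]
    constructor
    · rintro (rfl | h1 | h1)
      · exact Or.inl rfl
      · refine Or.inr (Or.inl ?_)
        rw [← h1, sub_sub_cancel]
      · refine Or.inr (Or.inr ?_)
        rw [sub_eq_iff_eq_add] at h1
        exact h1.trans (add_comm 1 v)
    · rintro (rfl | rfl | rfl)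
      · exact Or.inl rfl
      · exact Or.inr (Or.inl (sub_sub_cancel v 1))
      · exact Or.inr (Or.inr (add_sub_cancel_left v 1))
  have hNset : ∀ v : Fin (m + 3),
      insert v (G.neighborFinset v) = {v - 1, v, v + 1} := by
    intro v
    ext a
    rw [hmem]
    simp only [Finset.mem_insert, Finset.mem_singleton]
    tauto
  have hcard3 : ∀ v : Fin (m + 3), (insert v (G.neighborFinset v)).card = 3 := by
    intro v
    have h1 := fin_val_sub_one v
    have h2 := fin_val_add_one v
    have h3 := v.isLt
    rw [hNset v, Finset.card_insert_of_notMem, Finset.card_insert_of_notMem,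
      Finset.card_singleton]
    · simp only [Finset.mem_singleton]
      exact hne _ _ (by rw [h2]; split <;> omega)
    · simp only [Finset.mem_insert, Finset.mem_singleton]
      push_neg
      refine ⟨hne _ _ ?_, hne _ _ ?_⟩
      · rw [h1]; split <;> omega
      · rw [h1, h2]; split <;> split <;> omega
  have hsymm : ∀ s v : Fin (m + 3),
      s ∈ insert v (G.neighborFinset v) ↔ v ∈ insert s (G.neighborFinset s) := by
    intro s v
    rw [hmem, hmem]
    constructor <;> rintro (rfl | rfl | rfl)
    · exact Or.inl rfl
    · exact Or.inr (Or.inr (sub_add_cancel v 1).symm)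
    · exact Or.inr (Or.inl (add_sub_cancel_right v 1).symm)
    · exact Or.inl rfl
    · exact Or.inr (Or.inr (sub_add_cancel s 1).symm)
    · exact Or.inr (Or.inl (add_sub_cancel_right s 1).symm)
  -- lower bound by double counting
  have lower : ∀ S : Finset (Fin (m + 3)), IsDoubleDomSet G S →
      2 * (m + 3) ≤ 3 * S.card := by
    intro S hS
    have h1 : 2 * (m + 3) ≤ ∑ v : Fin (m + 3), (S ∩ insert v (G.neighborFinset v)).card := by
      calc 2 * (m + 3) = ∑ _v : Fin (m + 3), 2 := by
            simp [Finset.sum_const, Finset.card_univ, mul_comm]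
        _ ≤ _ := Finset.sum_le_sum fun v _ => hS v
    have h2 : ∑ v : Fin (m + 3), (S ∩ insert v (G.neighborFinset v)).card = 3 * S.card := by
      calc ∑ v : Fin (m + 3), (S ∩ insert v (G.neighborFinset v)).card
          = ∑ v : Fin (m + 3), ∑ s ∈ S,
              if s ∈ insert v (G.neighborFinset v) then 1 else 0 := by
            refine Finset.sum_congr rfl fun v _ => ?_
            rw [← Finset.filter_mem_eq_inter, Finset.card_eq_sum_ones, Finset.sum_filter]
        _ = ∑ s ∈ S, ∑ v : Fin (m + 3),
              if s ∈ insert v (G.neighborFinset v) then 1 else 0 := Finset.sum_comm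
        _ = ∑ _s ∈ S, (3 : ℕ) := by
            refine Finset.sum_congr rfl fun s _ => ?_
            rw [Finset.sum_congr rfl fun v _ => by
              rw [if_congr (hsymm s v) rfl rfl]]
            rw [← Finset.sum_filter, ← Finset.card_eq_sum_ones]
            have hfil : Finset.univ.filter (fun v => v ∈ insert s (G.neighborFinset s))
                = insert s (G.neighborFinset s) := by
              ext a; simp
            rw [hfil, hcard3]
        _ = 3 * S.card := by rw [Finset.sum_const, smul_eq_mul, mul_comm]
    omega
  -- the explicit dominating set
  set S₀ : Finset (Fin (m + 3)) := Finset.univ.filter (fun i => ¬ (i : ℕ) % 3 = 2) with hS₀def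
  have hcardS₀ : S₀.card = (2 * (m + 3) + 2) / 3 := by
    have hp : (Finset.univ.filter (fun i : Fin (m + 3) => (i : ℕ) % 3 = 2)).card
        = (m + 3) / 3 := by
      rw [Finset.card_eq_sum_ones, Finset.sum_filter,
        Fin.sum_univ_eq_sum_range (fun i => if i % 3 = 2 then (1 : ℕ) else 0),
        ← Finset.sum_filter, ← Finset.card_eq_sum_ones, range_filter_mod3]
    have hsplit := Finset.card_filter_add_card_filter_not
      (s := (Finset.univ : Finset (Fin (m + 3)))) (p := fun i => (i : ℕ) % 3 = 2)
    rw [Finset.card_univ, Fintype.card_fin] at hsplit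
    rw [hS₀def]
    omega
  have mS : ∀ a : Fin (m + 3), (a : ℕ) % 3 ≠ 2 → a ∈ S₀ :=
    fun a ha => Finset.mem_filter.mpr ⟨Finset.mem_univ _, ha⟩
  have hdom : IsDoubleDomSet G S₀ := by
    intro v
    have h1 := fin_val_sub_one v
    have h2 := fin_val_add_one v
    have h3 := v.isLt
    have hr : (v : ℕ) % 3 = 0 ∨ (v : ℕ) % 3 = 1 ∨ (v : ℕ) % 3 = 2 := by omega
    rcases hr with hr | hr | hr
    · exact Finset.one_lt_card.mpr ⟨v,
        Finset.mem_inter.mpr ⟨mS v (by omega), (hmem v v).mpr (Or.inl rfl)⟩,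
        v + 1,
        Finset.mem_inter.mpr ⟨mS _ (by rw [h2]; split <;> omega),
          (hmem v _).mpr (Or.inr (Or.inr rfl))⟩,
        hne _ _ (by rw [h2]; split <;> omega)⟩
    · exact Finset.one_lt_card.mpr ⟨v - 1,
        Finset.mem_inter.mpr ⟨mS _ (by rw [h1]; split <;> omega),
          (hmem v _).mpr (Or.inr (Or.inl rfl))⟩,
        v,
        Finset.mem_inter.mpr ⟨mS v (by omega), (hmem v v).mpr (Or.inl rfl)⟩,
        hne _ _ (by rw [h1]; split <;> omega)⟩
    · exact Finset.one_lt_card.mpr ⟨v - 1,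
        Finset.mem_inter.mpr ⟨mS _ (by rw [h1]; split <;> omega),
          (hmem v _).mpr (Or.inr (Or.inl rfl))⟩,
        v + 1,
        Finset.mem_inter.mpr ⟨mS _ (by rw [h2]; split <;> omega),
          (hmem v _).mpr (Or.inr (Or.inr rfl))⟩,
        hne _ _ (by rw [h1, h2]; split <;> split <;> omega)⟩
  -- conclude
  unfold doubleDomNum
  apply le_antisymm
  · exact Nat.sInf_le ⟨S₀, hdom, hcardS₀⟩
  · refine le_csInf ⟨S₀.card, S₀, hdom, rfl⟩ ?_
    rintro b ⟨S, hS, rfl⟩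
    have := lower S hS
    omega
end

section
/- If G is a graph on n ≥ 3 vertices containing a Hamiltonian cycle, then G has a double dominating set of size at most ⌈2n/3⌉. -/
open SimpleGraph

/-!
A Hamiltonian cycle is a spanning copy of the cycle `Cₙ`, and a double dominating set of a
spanning subgraph is one of `G`. In `Cₙ` on `0, …, n - 1`, keep every vertex except those
`≡ 2 (mod 3)`: a dropped vertex has both neighbours kept (if it is `n - 1`, its successor is `0`),
and every kept vertex has a kept neighbour. This keeps `n - ⌊n/3⌋ = ⌈2n/3⌉` vertices.
-/

open Finset

theorem Fin.card_filter_val_mod_three_ne_two (n : ℕ) :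
    #{i : Fin n | i.val % 3 ≠ 2} = n - n / 3 := by
  have hval : ({i : Fin n | i.val % 3 ≠ 2} : Finset _).map Fin.valEmbedding
      = {i ∈ range n | ¬ 3 ∣ i + 1} := by
    ext i
    simp only [mem_map, mem_filter, mem_univ, true_and, Fin.valEmbedding_apply, mem_range]
    constructor
    · rintro ⟨j, hj, rfl⟩
      exact ⟨j.isLt, by omega⟩
    · rintro ⟨hi, hi3⟩
      exact ⟨⟨i, hi⟩, by simp only; omega, rfl⟩
  rw [← card_map, hval, filter_not, card_sdiff_of_subset (filter_subset _ _), card_range,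
    Nat.card_multiples]

theorem isDoubleDomSet_cycleGraph {n : ℕ} (hn : 3 ≤ n) :
    IsDoubleDomSet (cycleGraph n) {i | i.val % 3 ≠ 2} := by
  obtain ⟨m, rfl⟩ : ∃ m, n = m + 3 := ⟨n - 3, by omega⟩
  intro v
  suffices ∃ a b, a ≠ b ∧ a.val % 3 ≠ 2 ∧ b.val % 3 ≠ 2 ∧
      (a = v ∨ a = v - 1 ∨ a = v + 1) ∧ (b = v ∨ b = v - 1 ∨ b = v + 1) by
    obtain ⟨a, b, hab, ha, hb, hav, hbv⟩ := this
    refine one_lt_card.2 ⟨a, ?_, b, ?_, hab⟩ <;> simp [cycleGraph_neighborFinset, *]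
  have hsucc : v.val = m + 2 ∧ (v + 1).val = 0 ∨ v.val < m + 2 ∧ (v + 1).val = v.val + 1 := by
    grind [Fin.val_add_one]
  have hpred : v.val = 0 ∧ (v - 1).val = m + 2 ∨ 0 < v.val ∧ (v - 1).val = v.val - 1 := by
    grind [Fin.coe_sub_one]
  simp only [ne_eq, Fin.ext_iff]
  rcases (by omega : v.val % 3 = 0 ∨ v.val % 3 = 1 ∨ v.val % 3 = 2) with h | h | h
  · exact ⟨v, v + 1, by omega, by omega, by omega, by simp, by simp⟩
  · exact ⟨v, v - 1, by omega, by omega, by omega, by simp, by simp⟩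
  · exact ⟨v - 1, v + 1, by omega, by omega, by omega, by simp, by simp⟩

theorem exists_doubleDomSet_cycleGraph {n : ℕ} (hn : 3 ≤ n) :
    ∃ S : Finset (Fin n), IsDoubleDomSet (cycleGraph n) S ∧ #S ≤ (2 * n + 2) / 3 :=
  ⟨_, isDoubleDomSet_cycleGraph hn, by
    rw [Fin.card_filter_val_mod_three_ne_two]
    omega⟩

theorem IsDoubleDomSet.map_copy {W V : Type*} [Fintype W] [DecidableEq W] [Fintype V]
    [DecidableEq V] {H : SimpleGraph W} [DecidableRel H.Adj] {G : SimpleGraph V}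
    [DecidableRel G.Adj] {S : Finset W} (hS : IsDoubleDomSet H S) (f : H.Copy G)
    (hf : Function.Surjective f) : IsDoubleDomSet G (S.map f.toEmbedding) := by
  intro v
  obtain ⟨u, rfl⟩ := hf v
  have hsub : (S ∩ insert u (H.neighborFinset u)).map f.toEmbedding
      ⊆ S.map f.toEmbedding ∩ insert (f u) (G.neighborFinset (f u)) := by
    intro x hx
    obtain ⟨w, hw, rfl⟩ := mem_map.1 hx
    rw [mem_inter, mem_insert, mem_neighborFinset] at hw
    rw [mem_inter, mem_insert, mem_neighborFinset]
    exact ⟨mem_map_of_mem _ hw.1, hw.2.imp (congrArg f) f.toHom.map_adj⟩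
  calc 2 ≤ #(S ∩ insert u (H.neighborFinset u)) := hS u
    _ = #((S ∩ insert u (H.neighborFinset u)).map f.toEmbedding) := (card_map _).symm
    _ ≤ _ := card_le_card hsub

/-- A graph on `n ≥ 3` vertices with a Hamiltonian cycle has a
double dominating set of size at most `⌈2n/3⌉`. -/
theorem exists_doubleDomSet_of_hamiltonian {V : Type*} [Fintype V] [DecidableEq V]
    (G : SimpleGraph V) [DecidableRel G.Adj] (hn : 3 ≤ Fintype.card V)
    (hham : ∃ (v : V) (p : G.Walk v v), p.IsHamiltonianCycle) :
    ∃ S : Finset V, IsDoubleDomSet G S ∧ S.card ≤ (2 * Fintype.card V + 2) / 3 := by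
  obtain ⟨v, p, hp⟩ := hham
  obtain ⟨f⟩ : cycleGraph (Fintype.card V) ⊑ G :=
    (cycleGraph_isContained_iff hn).2 ⟨v, p, hp.isCycle, hp.length_eq⟩
  have hf : Function.Surjective f :=
    ((Fintype.bijective_iff_injective_and_card f).2 ⟨f.injective, Fintype.card_fin _⟩).2
  obtain ⟨S, hS, hcard⟩ := exists_doubleDomSet_cycleGraph hn
  exact ⟨S.map f.toEmbedding, hS.map_copy f hf, by rwa [card_map]⟩
end

section
/- Every maximal K4-minor-free graph (equivalently, every 2-tree) on n ≥ 3 vertices has a double dominating set of size at most ⌊2n/3⌋. -/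
open SimpleGraph

lemma fin3_exists_ne : ∀ a b : Fin 3, ∃ k : Fin 3, k ≠ a ∧ k ≠ b := by decide

/-- A 2-tree is properly 3-colorable. -/
lemma twoTree_coloring {V : Type*} [DecidableEq V] (G : SimpleGraph V)
    {s : Finset V} (h : IsTwoTreeOn G s) :
    ∃ c : V → Fin 3, ∀ u ∈ s, ∀ w ∈ s, G.Adj u w → c u ≠ c w := by
  induction h with
  | @triangle a b c hab hac hbc Gab Gac Gbc =>
      refine ⟨fun v => if v = a then 0 else if v = b then 1 else 2, ?_⟩
      intro u hu w hw huw
      have hne : u ≠ w := G.ne_of_adj huw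
      simp only [Finset.mem_insert, Finset.mem_singleton] at hu hw
      rcases hu with rfl | rfl | rfl <;> rcases hw with rfl | rfl | rfl <;>
        simp_all [hab, hac, hbc, hab.symm, hac.symm, hbc.symm]
  | @grow s x y v hs hx hy hxy hv hadj ih =>
      obtain ⟨c, hc⟩ := ih
      obtain ⟨k, hk1, hk2⟩ := fin3_exists_ne (c x) (c y)
      refine ⟨Function.update c v k, ?_⟩
      intro u hu w hw huw
      rcases Finset.mem_insert.mp hu with rfl | hu' <;>
        rcases Finset.mem_insert.mp hw with rfl | hw'
      · exact absurd huw (G.irrefl)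
      · have hwv : w ≠ u := fun hh => hv (hh ▸ hw')
        rw [Function.update_self, Function.update_of_ne hwv]
        rcases (hadj w hw').mp huw with rfl | rfl
        · exact hk1
        · exact hk2
      · have huv : u ≠ w := fun hh => hv (hh ▸ hu')
        rw [Function.update_self, Function.update_of_ne huv]
        rcases (hadj u hu').mp huw.symm with rfl | rfl
        · exact hk1.symm
        · exact hk2.symm
      · have huv : u ≠ v := fun hh => hv (hh ▸ hu')
        have hwv : w ≠ v := fun hh => hv (hh ▸ hw')
        rw [Function.update_of_ne huv, Function.update_of_ne hwv]
        exact hc u hu' w hw' huw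

/-- Every vertex of a 2-tree lies in a triangle. -/
lemma twoTree_triangleAt {V : Type*} [DecidableEq V] (G : SimpleGraph V)
    {s : Finset V} (h : IsTwoTreeOn G s) :
    ∀ v ∈ s, ∃ x y, G.Adj v x ∧ G.Adj v y ∧ G.Adj x y := by
  induction h with
  | @triangle a b c hab hac hbc Gab Gac Gbc =>
      intro v hv
      simp only [Finset.mem_insert, Finset.mem_singleton] at hv
      rcases hv with rfl | rfl | rfl
      · exact ⟨b, c, Gab, Gac, Gbc⟩
      · exact ⟨a, c, Gab.symm, Gbc, Gac⟩
      · exact ⟨a, b, Gac.symm, Gbc.symm, Gab⟩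
  | @grow s x y v hs hx hy hxy hv hadj ih =>
      intro w hw
      rcases Finset.mem_insert.mp hw with rfl | hw'
      · exact ⟨x, y, (hadj x hx).mpr (Or.inl rfl), (hadj y hy).mpr (Or.inr rfl), hxy⟩
      · exact ih w hw'

/-- Every maximal `K₄`-minor-free graph (equivalently, every
2-tree) on `n ≥ 3` vertices has a double dominating set of size at most
`⌊2n/3⌋`. -/
theorem exists_doubleDomSet_of_isTwoTree {V : Type*} [Fintype V] [DecidableEq V]
    (G : SimpleGraph V) [DecidableRel G.Adj] (h : IsTwoTree G)
    (hn : 3 ≤ Fintype.card V) :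
    ∃ S : Finset V, IsDoubleDomSet G S ∧ S.card ≤ 2 * Fintype.card V / 3 := by
  obtain ⟨c, hc⟩ := twoTree_coloring G h
  have hproper : ∀ u w, G.Adj u w → c u ≠ c w := fun u w huw =>
    hc u (Finset.mem_univ u) w (Finset.mem_univ w) huw
  have hsum : Fintype.card V = ∑ i : Fin 3, (Finset.univ.filter fun v => c v = i).card := by
    rw [← Finset.card_univ]
    exact Finset.card_eq_sum_card_fiberwise (fun x _ => Finset.mem_univ (c x))
  obtain ⟨i, hi⟩ : ∃ i : Fin 3,
      Fintype.card V ≤ 3 * (Finset.univ.filter fun v => c v = i).card := by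
    by_contra hcon
    push_neg at hcon
    have h0 := hcon 0; have h1 := hcon 1; have h2 := hcon 2
    rw [Fin.sum_univ_three] at hsum
    omega
  refine ⟨Finset.univ.filter fun v => c v ≠ i, ?_, ?_⟩
  · intro v
    obtain ⟨x, y, hvx, hvy, hxy⟩ := twoTree_triangleAt G h v (Finset.mem_univ v)
    have hcvx := hproper _ _ hvx
    have hcvy := hproper _ _ hvy
    have hcxy := hproper _ _ hxy
    have key : ∃ u₁ u₂, u₁ ≠ u₂ ∧ (c u₁ ≠ i ∧ (u₁ = v ∨ G.Adj v u₁)) ∧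
        (c u₂ ≠ i ∧ (u₂ = v ∨ G.Adj v u₂)) := by
      by_cases h1 : c v = i
      · exact ⟨x, y, hxy.ne, ⟨fun hh => hcvx (h1.trans hh.symm), Or.inr hvx⟩,
          ⟨fun hh => hcvy (h1.trans hh.symm), Or.inr hvy⟩⟩
      · by_cases h2 : c x = i
        · exact ⟨v, y, hvy.ne, ⟨h1, Or.inl rfl⟩,
            ⟨fun hh => hcxy (h2.trans hh.symm), Or.inr hvy⟩⟩
        · exact ⟨v, x, hvx.ne, ⟨h1, Or.inl rfl⟩, ⟨h2, Or.inr hvx⟩⟩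
    obtain ⟨u₁, u₂, hne, ⟨hc1, hm1⟩, ⟨hc2, hm2⟩⟩ := key
    have hsub : ({u₁, u₂} : Finset V) ⊆
        (Finset.univ.filter fun v => c v ≠ i) ∩ insert v (G.neighborFinset v) := by
      intro z hz
      simp only [Finset.mem_insert, Finset.mem_singleton] at hz
      simp only [Finset.mem_inter, Finset.mem_filter, Finset.mem_univ, true_and,
        Finset.mem_insert, SimpleGraph.mem_neighborFinset]
      rcases hz with rfl | rfl
      · exact ⟨hc1, hm1⟩
      · exact ⟨hc2, hm2⟩
    calc 2 = ({u₁, u₂} : Finset V).card := (Finset.card_pair hne).symm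
      _ ≤ _ := Finset.card_le_card hsub
  · have hpart : ((Finset.univ : Finset V).filter fun v => c v = i).card +
        ((Finset.univ : Finset V).filter fun v => ¬ (c v = i)).card =
        (Finset.univ : Finset V).card :=
      Finset.card_filter_add_card_filter_not _
    rw [Finset.card_univ] at hpart
    rw [Nat.le_div_iff_mul_le (by norm_num)]
    simp only [ne_eq]
    omega
end

section
/- Every maximal outerplanar graph G can be properly 4-colored so that every 4-cycle of G receives all four colors. -/
open SimpleGraph

/-!
Two vertices of an outerplanar graph have at most two common neighbours (three would give a
`K₂,₃` minor), and a finite nonempty outerplanar graph has a vertex `v` of degree at most two.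
Colour the graph obtained by deleting `v` (if it has at most one neighbour) or by contracting `v`
into one of its two neighbours `x`, `y` (which makes `x` and `y` adjacent); it is a smaller
outerplanar graph. The vertices whose colour `v` must avoid are its neighbours and the vertices
opposite to it on a `4`-cycle, i.e. the common neighbours of `x` and `y` other than `v`: at most
three in all, so one of the four colours is free for `v`.

The degree bound is proved by induction on the number of vertices for a stronger claim: no
outerplanar graph has all degrees at least three except at a single non-isolated vertex, or
except at the two ends of an edge, where the degrees are at least two. Contracting a well-chosen
edge, or keeping the part of the graph cut off by one vertex or by two adjacent vertices, yields
a smaller graph of one of these two kinds; this fails only when two adjacent vertices have three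
common neighbours (a `K₂,₃` minor) or two common neighbours joined by a path avoiding them (a
`K₄` minor).
-/

universe u

section

variable {V W X : Type*}

namespace SimpleGraph

variable {G : SimpleGraph V} {H : SimpleGraph W}

lemma connected_induce_singleton (x : V) : (G.induce {x}).Connected := by
  rw [induce_singleton_eq_top]
  exact connected_top

lemma induce_biUnion_connected {s : Set W} {g : W → Set V} (hs : (H.induce s).Connected)
    (hne : ∀ w ∈ s, (g w).Nonempty) (hconn : ∀ w ∈ s, (G.induce (g w)).Connected)
    (hadj : ∀ w ∈ s, ∀ w' ∈ s, H.Adj w w' → ∃ x ∈ g w, ∃ x' ∈ g w', G.Adj x x') :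
    (G.induce (⋃ w ∈ s, g w)).Connected := by
  set U := ⋃ w ∈ s, g w
  have hsub : ∀ {w}, w ∈ s → g w ⊆ U := fun hw => Set.subset_biUnion_of_mem hw
  let R : s → s → Prop := fun w w' => ∀ x (hx : x ∈ g w) y (hy : y ∈ g w'),
    (G.induce U).Reachable ⟨x, hsub w.2 hx⟩ ⟨y, hsub w'.2 hy⟩
  have hR_refl : ∀ w, R w w := fun w x hx y hy =>
    ((hconn w w.2).preconnected ⟨x, hx⟩ ⟨y, hy⟩).map (induceHomOfLE G (hsub w.2)).toHom
  have hR_adj : ∀ w w' : s, H.Adj w w' → R w w' := by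
    intro w w' h x hx y hy
    obtain ⟨a, ha, b, hb, hab⟩ := hadj w w.2 w' w'.2 h
    have hU : g w ∪ g w' ⊆ U := Set.union_subset (hsub w.2) (hsub w'.2)
    exact ((connected_induce_union (hconn w w.2).preconnected (hconn w' w'.2).preconnected
      ha hb hab).preconnected ⟨x, .inl hx⟩ ⟨y, .inr hy⟩).map (induceHomOfLE G hU).toHom
  have hR : ∀ w w', R w w' := by
    intro w w'
    induction (reachable_iff_reflTransGen w w').mp (hs.preconnected w w') with
    | refl => exact hR_refl w
    | tail _ hbc ih =>
      intro x hx y hy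
      obtain ⟨z, hz⟩ := hne _ (Subtype.property _)
      exact (ih x hx z hz).trans (hR_adj _ _ hbc z hz y hy)
  obtain ⟨w₀, hw₀⟩ := hs.nonempty
  obtain ⟨x₀, hx₀⟩ := hne w₀ hw₀
  rw [connected_iff_exists_forall_reachable]
  refine ⟨⟨x₀, hsub hw₀ hx₀⟩, fun ⟨y, hy⟩ => ?_⟩
  obtain ⟨w, hw, hyw⟩ := Set.mem_iUnion₂.mp hy
  exact hR ⟨w₀, hw₀⟩ ⟨w, hw⟩ x₀ hx₀ y hyw

lemma ncard_neighborSet_induce_eq [Finite V] {s : Set V} {x : V} (hx : x ∈ s) :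
    ((G.induce s).neighborSet ⟨x, hx⟩).ncard = (G.neighborSet x ∩ s).ncard := by
  rw [← Set.ncard_preimage_of_injective_subset_range (f := ((↑) : s → V))
    Subtype.val_injective (s := G.neighborSet x ∩ s) (by simp)]
  congr 1
  ext
  simp

lemma ncard_le_ncard_neighborSet_map [Finite W] {f : V → W} {s : Set V} {w : W}
    (hinj : Set.InjOn f s) (hne : ∀ y ∈ s, f y ≠ w)
    (hadj : ∀ y ∈ s, ∃ x, f x = w ∧ G.Adj x y) :
    s.ncard ≤ ((G.map f).neighborSet w).ncard := by
  rw [← hinj.ncard_image]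
  refine Set.ncard_le_ncard ?_
  rintro _ ⟨y, hy, rfl⟩
  obtain ⟨x, rfl, hxy⟩ := hadj y hy
  exact ⟨(hne y hy).symm, x, y, hxy, rfl, rfl⟩

end SimpleGraph

section Contraction

variable {u v : V}

open Classical in
/-- `G.map (contractMap huv)` is `G` with `v` contracted into `u`. -/
noncomputable def contractMap (huv : u ≠ v) (w : V) : {w // w ≠ v} :=
  if h : w = v then ⟨u, huv⟩ else ⟨w, h⟩

variable (huv : u ≠ v)

lemma contractMap_of_ne {w : V} (hw : w ≠ v) : contractMap huv w = ⟨w, hw⟩ := dif_neg hw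

lemma contractMap_right : contractMap huv v = ⟨u, huv⟩ := dif_pos rfl

lemma contractMap_left : contractMap huv u = ⟨u, huv⟩ := contractMap_of_ne huv huv

lemma contractMap_of_eq_or {w : V} (hw : w = u ∨ w = v) : contractMap huv w = ⟨u, huv⟩ := by
  rcases hw with rfl | rfl
  exacts [contractMap_left huv, contractMap_right huv]

lemma contractMap_surjective : Function.Surjective (contractMap huv) :=
  fun w => ⟨w, contractMap_of_ne huv w.2⟩

lemma contractMap_eq_iff {w w' : V} (hw : w ≠ v) :
    contractMap huv w' = ⟨w, hw⟩ ↔ w' = w ∨ (w = u ∧ w' = v) := by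
  by_cases hw' : w' = v
  · subst hw'
    simp [contractMap_right, eq_comm, hw]
  · simp [contractMap_of_ne huv hw', hw']

lemma contractMap_injOn {s : Set V} (hs : ¬(u ∈ s ∧ v ∈ s)) : Set.InjOn (contractMap huv) s := by
  intro w hw w' hw' h
  by_cases hwv : w = v
  · subst hwv
    rcases (contractMap_eq_iff huv huv).mp (h.symm.trans (contractMap_right huv)) with
      rfl | ⟨-, rfl⟩
    · exact absurd ⟨hw', hw⟩ hs
    · rfl
  · rcases (contractMap_eq_iff huv hwv).mp (h.symm.trans (contractMap_of_ne huv hwv)) with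
      rfl | ⟨rfl, rfl⟩
    · rfl
    · exact absurd ⟨hw, hw'⟩ hs

namespace SimpleGraph

variable {G : SimpleGraph V}

lemma map_contractMap_adj {a b : V} (hab : G.Adj a b) (ha : a ≠ v) (hb : b ≠ v) :
    (G.map (contractMap huv)).Adj ⟨a, ha⟩ ⟨b, hb⟩ :=
  ⟨fun h => hab.ne (congrArg Subtype.val h), a, b, hab, contractMap_of_ne huv ha,
    contractMap_of_ne huv hb⟩

variable [Finite V]

lemma ncard_neighborSet_le_contract {x : V} (hxu : x ≠ u) (hxv : x ≠ v)
    (hx : ¬(G.Adj x u ∧ G.Adj x v)) :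
    (G.neighborSet x).ncard ≤ ((G.map (contractMap huv)).neighborSet ⟨x, hxv⟩).ncard := by
  refine ncard_le_ncard_neighborSet_map (contractMap_injOn huv hx) (fun y hy => ?_)
    fun y hy => ⟨x, contractMap_of_ne huv hxv, hy⟩
  rw [Ne, contractMap_eq_iff]
  exact fun h => h.elim (fun h => hy.ne h.symm) fun h => hxu h.1

lemma ncard_neighborSet_le_contract_add_one {x : V} (hxu : x ≠ u) (hxv : x ≠ v) :
    (G.neighborSet x).ncard ≤ ((G.map (contractMap huv)).neighborSet ⟨x, hxv⟩).ncard + 1 := by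
  have : (G.neighborSet x \ {v}).ncard ≤
      ((G.map (contractMap huv)).neighborSet ⟨x, hxv⟩).ncard := by
    refine ncard_le_ncard_neighborSet_map (contractMap_injOn huv (by simp)) (fun y hy => ?_)
      fun y hy => ⟨x, contractMap_of_ne huv hxv, hy.1⟩
    rw [Ne, contractMap_eq_iff]
    exact fun h => h.elim (fun h => hy.1.ne h.symm) fun h => hxu h.1
  have := Set.ncard_le_ncard_sdiff_add_ncard (G.neighborSet x) {v}
  simp only [Set.ncard_singleton] at this
  omega

lemma ncard_neighborSet_union_sdiff_le_contract :
    ((G.neighborSet u ∪ G.neighborSet v) \ {u, v}).ncard ≤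
      ((G.map (contractMap huv)).neighborSet ⟨u, huv⟩).ncard := by
  refine ncard_le_ncard_neighborSet_map (contractMap_injOn huv (by simp)) (fun y hy => ?_)
    fun y hy => ?_
  · simp only [Set.mem_sdiff, Set.mem_insert_iff, Set.mem_singleton_iff, not_or] at hy
    rw [Ne, contractMap_eq_iff]
    tauto
  · rcases hy.1 with hy | hy
    · exact ⟨u, contractMap_left huv, hy⟩
    · exact ⟨v, contractMap_right huv, hy⟩

lemma ncard_neighborSet_left_le_contract_add_one :
    (G.neighborSet u).ncard ≤ ((G.map (contractMap huv)).neighborSet ⟨u, huv⟩).ncard + 1 := by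
  have hsub : G.neighborSet u \ {v} ⊆ (G.neighborSet u ∪ G.neighborSet v) \ {u, v} := by
    rintro y ⟨hy, hyv⟩
    exact ⟨.inl hy, by rintro (rfl | rfl) <;> simp_all⟩
  have := Set.pred_ncard_le_ncard_sdiff_singleton (G.neighborSet u) v
  have := Set.ncard_le_ncard hsub
  have := ncard_neighborSet_union_sdiff_le_contract (G := G) huv
  omega

end SimpleGraph

end Contraction

section Minor

variable {G : SimpleGraph V} {H : SimpleGraph W} {K : SimpleGraph X}

lemma HasMinor.trans (hGH : HasMinor G H) (hHK : HasMinor H K) : HasMinor G K := by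
  obtain ⟨g, hg_ne, hg_conn, hg_disj, hg_adj⟩ := hGH
  obtain ⟨f, hf_ne, hf_conn, hf_disj, hf_adj⟩ := hHK
  refine ⟨fun k => ⋃ w ∈ f k, g w, fun k => ?_, fun k => ?_, fun k k' hkk' => ?_, ?_⟩
  · obtain ⟨w, hw⟩ := hf_ne k
    exact (hg_ne w).mono (Set.subset_biUnion_of_mem hw)
  · exact induce_biUnion_connected (hf_conn k) (fun w _ => hg_ne w) (fun w _ => hg_conn w)
      fun w _ w' _ h => hg_adj h
  · refine Set.disjoint_iUnion₂_left.mpr fun w hw => Set.disjoint_iUnion₂_right.mpr fun w' hw' => ?_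
    exact hg_disj fun h => Set.disjoint_left.mp (hf_disj hkk') hw (h ▸ hw')
  · intro k k' hkk'
    obtain ⟨w, hw, w', hw', hww'⟩ := hf_adj hkk'
    obtain ⟨x, hx, x', hx', hxx'⟩ := hg_adj hww'
    exact ⟨x, Set.mem_biUnion hw hx, x', Set.mem_biUnion hw' hx', hxx'⟩

lemma hasMinor_of_injective (f : H →g G) (hf : Function.Injective f) : HasMinor G H := by
  refine ⟨fun w => {f w}, fun w => Set.singleton_nonempty _,
    fun w => G.connected_induce_singleton (f w), ?_, ?_⟩
  · exact fun w w' h => Set.disjoint_singleton.mpr (hf.ne h)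
  · exact fun w w' h => ⟨f w, rfl, f w', rfl, f.map_adj h⟩

lemma hasMinor_induce (s : Set V) : HasMinor G (G.induce s) :=
  hasMinor_of_injective (Embedding.induce s).toHom Subtype.val_injective

lemma hasMinor_map {f : V → W} (hf : Function.Surjective f)
    (hfib : ∀ w, (G.induce (f ⁻¹' {w})).Connected) : HasMinor G (G.map f) := by
  refine ⟨fun w => f ⁻¹' {w}, fun w => ?_, hfib, ?_, ?_⟩
  · obtain ⟨x, hx⟩ := hf w
    exact ⟨x, hx⟩
  · exact fun w w' h => Set.disjoint_left.mpr fun x hx hx' => h (hx.symm.trans hx')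
  · rintro w w' ⟨-, x, x', hxx', rfl, rfl⟩
    exact ⟨x, rfl, x', rfl, hxx'⟩

lemma hasMinor_contract {u v : V} (hadj : G.Adj u v) :
    HasMinor G (G.map (contractMap hadj.ne)) := by
  refine hasMinor_map (contractMap_surjective _) fun ⟨w, hw⟩ => ?_
  by_cases hwu : w = u
  · subst hwu
    have : contractMap hadj.ne ⁻¹' {⟨w, hw⟩} = {w, v} := by
      ext; simp [contractMap_eq_iff, or_comm]
    rw [this]
    exact induce_pair_connected_of_adj hadj
  · have : contractMap hadj.ne ⁻¹' {⟨w, hw⟩} = {w} := by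
      ext; simp [contractMap_eq_iff, hwu]
    rw [this]
    exact G.connected_induce_singleton w

lemma Outerplanar.of_hasMinor (hG : Outerplanar G) (h : HasMinor G H) : Outerplanar H :=
  ⟨fun hK => hG.1 (h.trans hK), fun hK => hG.2 (h.trans hK)⟩

lemma Outerplanar.ncard_inter_neighborSet_le_two [Finite V] (hG : Outerplanar G) {x y : V}
    (hxy : x ≠ y) : (G.neighborSet x ∩ G.neighborSet y).ncard ≤ 2 := by
  by_contra! h
  obtain ⟨z₀, z₁, z₂, ⟨hx₀, hy₀⟩, ⟨hx₁, hy₁⟩, ⟨hx₂, hy₂⟩, h₀₁, h₀₂, h₁₂⟩ :=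
    (Set.two_lt_ncard_iff).mp h
  let f : completeBipartiteGraph (Fin 2) (Fin 3) →g G :=
    { toFun := Sum.elim ![x, y] ![z₀, z₁, z₂]
      map_rel' := by
        rintro (i | j) (i' | j') h
        · simp at h
        · fin_cases i <;> fin_cases j' <;> simpa
        · fin_cases j <;> fin_cases i' <;> simpa [adj_comm]
        · simp at h }
  have hx : ∀ i, ![z₀, z₁, z₂] i ∈ G.neighborSet x := by intro i; fin_cases i <;> assumption
  have hy : ∀ i, ![z₀, z₁, z₂] i ∈ G.neighborSet y := by intro i; fin_cases i <;> assumption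
  refine hG.2 (hasMinor_of_injective f (Function.Injective.sumElim ?_ ?_ ?_))
  · intro i j; fin_cases i <;> fin_cases j <;> simp [hxy, hxy.symm]
  · intro i j; fin_cases i <;> fin_cases j <;> simp [h₀₁, h₀₂, h₁₂, h₀₁.symm, h₀₂.symm, h₁₂.symm]
  · intro i j
    fin_cases i
    · exact fun h => G.irrefl (v := x) (by simpa [← h] using hx j)
    · exact fun h => G.irrefl (v := y) (by simpa [← h] using hy j)

lemma Outerplanar.mem_support_of_common_neighbors (hG : Outerplanar G) {u v t t' : V}
    (huv : G.Adj u v) (ht : t ∈ G.neighborSet u ∩ G.neighborSet v)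
    (ht' : t' ∈ G.neighborSet u ∩ G.neighborSet v) (htt' : t ≠ t') (p : G.Walk t t') :
    u ∈ p.support ∨ v ∈ p.support := by
  classical
  by_contra! hp
  have hsub := p.support_bypass_subset_support
  have hpath := p.bypass_isPath
  generalize p.bypass = q at hsub hpath
  cases q with
  | nil => exact htt' rfl
  | cons hts r =>
    rw [Walk.cons_isPath_iff] at hpath
    rw [Walk.support_cons, List.cons_subset] at hsub
    have hu : u ∉ r.support := fun h => hp.1 (hsub.2 h)
    have hv : v ∉ r.support := fun h => hp.2 (hsub.2 h)
    obtain ⟨htu, htv⟩ := ht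
    obtain ⟨htu', htv'⟩ := ht'
    refine hG.1 ⟨![{u}, {v}, {t}, {x | x ∈ r.support}], fun i => ?_, fun i => ?_, ?_, ?_⟩
    · fin_cases i
      exacts [Set.singleton_nonempty _, Set.singleton_nonempty _, Set.singleton_nonempty _,
        ⟨_, r.start_mem_support⟩]
    · fin_cases i
      exacts [G.connected_induce_singleton u, G.connected_induce_singleton v,
        G.connected_induce_singleton t, r.connected_induce_support]
    · intro i j hij
      have := huv.ne; have := htu.ne; have := htv.ne
      fin_cases i <;> fin_cases j <;> simp_all [Set.disjoint_singleton_left,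
        Set.disjoint_singleton_right, eq_comm]
    · intro i j hij
      fin_cases i <;> fin_cases j <;> simp_all [adj_comm] <;>
        first
        | exact ⟨t', r.end_mem_support, by assumption⟩
        | exact ⟨_, r.start_mem_support, hts⟩

end Minor

namespace SimpleGraph

def DegreeThreeExceptVertex (G : SimpleGraph V) (v₀ : V) : Prop :=
  1 ≤ (G.neighborSet v₀).ncard ∧ ∀ x, x ≠ v₀ → 3 ≤ (G.neighborSet x).ncard

def DegreeThreeExceptEdge (G : SimpleGraph V) (a b : V) : Prop :=
  G.Adj a b ∧ 2 ≤ (G.neighborSet a).ncard ∧ 2 ≤ (G.neighborSet b).ncard ∧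
    ∀ x, x ≠ a → x ≠ b → 3 ≤ (G.neighborSet x).ncard

lemma DegreeThreeExceptEdge.symm {G : SimpleGraph V} {a b : V} (h : G.DegreeThreeExceptEdge a b) :
    G.DegreeThreeExceptEdge b a :=
  ⟨h.1.symm, h.2.2.1, h.2.1, fun x hb ha => h.2.2.2 x ha hb⟩

variable [Finite V] {G : SimpleGraph V}

lemma neighborSet_eq_pair {x y z : V} (hy : G.Adj x y) (hz : G.Adj x z) (hyz : y ≠ z)
    (h : (G.neighborSet x).ncard ≤ 2) : G.neighborSet x = {y, z} :=
  (Set.eq_of_subset_of_ncard_le (Set.pair_subset hy hz) (by rwa [Set.ncard_pair hyz])).symm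

lemma degreeThreeExceptEdge_induce {s : Set V} {u v t : V} (huv : G.Adj u v) (hu : u ∈ s)
    (hv : v ∈ s) (ht : t ∈ G.neighborSet u ∩ G.neighborSet v) (hts : t ∈ s)
    (hclosed : ∀ x ∈ s, x ≠ u → x ≠ v → G.neighborSet x ⊆ s)
    (hdeg : ∀ x, x ≠ u → x ≠ v → 3 ≤ (G.neighborSet x).ncard) :
    (G.induce s).DegreeThreeExceptEdge ⟨u, hu⟩ ⟨v, hv⟩ := by
  refine ⟨huv, ?_, ?_, fun ⟨x, hx⟩ hxu hxv => ?_⟩ <;> rw [ncard_neighborSet_induce_eq]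
  · rw [← Set.ncard_pair (G.ne_of_adj ht.2)]
    exact Set.ncard_le_ncard (Set.pair_subset ⟨huv, hv⟩ ⟨ht.1, hts⟩)
  · rw [← Set.ncard_pair (G.ne_of_adj ht.1)]
    exact Set.ncard_le_ncard (Set.pair_subset ⟨huv.symm, hu⟩ ⟨ht.2, hts⟩)
  · rw [Set.inter_eq_left.mpr (hclosed x hx (by simpa using hxu) (by simpa using hxv))]
    exact hdeg x (by simpa using hxu) (by simpa using hxv)

lemma degreeThreeExceptVertex_induce {s : Set V} {p : V} (hp : p ∈ s)
    (hp₁ : 1 ≤ (G.neighborSet p ∩ s).ncard) (hclosed : ∀ x ∈ s, x ≠ p → G.neighborSet x ⊆ s)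
    (hdeg : ∀ x ∈ s, x ≠ p → 3 ≤ (G.neighborSet x).ncard) :
    (G.induce s).DegreeThreeExceptVertex ⟨p, hp⟩ := by
  refine ⟨by rwa [ncard_neighborSet_induce_eq], fun ⟨x, hx⟩ hxp => ?_⟩
  have hxp : x ≠ p := by simpa using hxp
  rw [ncard_neighborSet_induce_eq, Set.inter_eq_left.mpr (hclosed x hx hxp)]
  exact hdeg x hx hxp

variable {u v : V}

lemma degreeThreeExceptVertex_contract_of_inter_subset {t : V} (huv : G.Adj u v)
    (hdeg : ∀ x, 3 ≤ (G.neighborSet x).ncard) (ht : G.neighborSet u ∩ G.neighborSet v ⊆ {t}) :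
    (G.map (contractMap huv.ne)).DegreeThreeExceptVertex (contractMap huv.ne t) := by
  have hmerged : 3 ≤ ((G.map (contractMap huv.ne)).neighborSet ⟨u, huv.ne⟩).ncard := by
    have := Set.ncard_union_add_ncard_inter (G.neighborSet u) (G.neighborSet v)
    have := (Set.ncard_le_ncard ht).trans (Set.ncard_singleton t).le
    have := Set.ncard_le_ncard_sdiff_add_ncard (G.neighborSet u ∪ G.neighborSet v) {u, v}
    have := Set.ncard_pair huv.ne
    have := ncard_neighborSet_union_sdiff_le_contract (G := G) huv.ne
    have := hdeg u; have := hdeg v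
    omega
  have hother : ∀ z (hzu : z ≠ u) (hzv : z ≠ v), z ≠ t →
      3 ≤ ((G.map (contractMap huv.ne)).neighborSet ⟨z, hzv⟩).ncard := by
    refine fun z hzu hzv hzt => (hdeg z).trans (ncard_neighborSet_le_contract huv.ne hzu hzv ?_)
    exact fun h => hzt (ht ⟨h.1.symm, h.2.symm⟩)
  refine ⟨?_, fun x hx => ?_⟩
  · by_cases htuv : t = u ∨ t = v
    · rw [contractMap_of_eq_or huv.ne htuv]
      omega
    · obtain ⟨htu, htv⟩ := not_or.mp htuv
      rw [contractMap_of_ne huv.ne htv]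
      have := ncard_neighborSet_le_contract_add_one (G := G) huv.ne htu htv
      have := hdeg t
      omega
  · obtain ⟨z, rfl⟩ := contractMap_surjective huv.ne x
    by_cases hzuv : z = u ∨ z = v
    · rwa [contractMap_of_eq_or huv.ne hzuv]
    · obtain ⟨hzu, hzv⟩ := not_or.mp hzuv
      rw [contractMap_of_ne huv.ne hzv]
      exact hother z hzu hzv fun h => hx (congrArg _ h)

lemma degreeThreeExceptVertex_contract {x : V} (hxv : G.Adj x v)
    (hx : 2 ≤ (G.neighborSet x).ncard) (hcommon : ∀ z, G.Adj v z → ¬G.Adj x z)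
    (hdeg : ∀ z, z ≠ x → z ≠ v → 3 ≤ (G.neighborSet z).ncard) :
    (G.map (contractMap hxv.ne)).DegreeThreeExceptVertex ⟨x, hxv.ne⟩ := by
  refine ⟨?_, fun w hw => ?_⟩
  · have := ncard_neighborSet_left_le_contract_add_one (G := G) hxv.ne
    omega
  · obtain ⟨z, rfl⟩ := contractMap_surjective hxv.ne w
    have hzxv : ¬(z = x ∨ z = v) := fun h => hw (contractMap_of_eq_or hxv.ne h)
    obtain ⟨hzx, hzv⟩ := not_or.mp hzxv
    rw [contractMap_of_ne hxv.ne hzv]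
    exact (hdeg z hzx hzv).trans (ncard_neighborSet_le_contract hxv.ne hzx hzv
      fun h => hcommon z h.2.symm h.1.symm)

lemma degreeThreeExceptEdge_contract {x y : V} (hxv : G.Adj x v) (hyv : G.Adj y v)
    (hv : G.neighborSet v ⊆ {x, y}) (hxy : G.Adj x y)
    (hdeg : ∀ z, z ≠ v → 3 ≤ (G.neighborSet z).ncard) :
    (G.map (contractMap hxv.ne)).DegreeThreeExceptEdge ⟨x, hxv.ne⟩ ⟨y, hyv.ne⟩ := by
  refine ⟨?_, ?_, ?_, fun w hwx hwy => ?_⟩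
  · exact map_contractMap_adj hxv.ne hxy hxv.ne hyv.ne
  · have := ncard_neighborSet_left_le_contract_add_one (G := G) hxv.ne
    have := hdeg x hxv.ne
    omega
  · have := ncard_neighborSet_le_contract_add_one (G := G) hxv.ne hxy.ne.symm hyv.ne
    have := hdeg y hyv.ne
    omega
  · obtain ⟨z, rfl⟩ := contractMap_surjective hxv.ne w
    have hzxv : ¬(z = x ∨ z = v) := fun h => hwx (contractMap_of_eq_or hxv.ne h)
    obtain ⟨hzx, hzv⟩ := not_or.mp hzxv
    have hzy : z ≠ y := fun h => hwy (h ▸ contractMap_of_ne hxv.ne hzv)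
    rw [contractMap_of_ne hxv.ne hzv]
    refine (hdeg z hzv).trans (ncard_neighborSet_le_contract hxv.ne hzx hzv fun h => ?_)
    rcases hv h.2.symm with h | h
    exacts [hzx h, hzy h]

end SimpleGraph

section LowDegree

def LowDegreeOfOuterplanar {V : Type*} (G : SimpleGraph V) : Prop :=
  Outerplanar G → (∀ v₀, ¬G.DegreeThreeExceptVertex v₀) ∧ ∀ a b, ¬G.DegreeThreeExceptEdge a b

variable {V : Type u} [Finite V] {G : SimpleGraph V}

lemma exists_ncard_neighborSet_lt_three_of_lt
    (ih : ∀ (W : Type u) [Finite W] (H : SimpleGraph W), Nat.card W < Nat.card V →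
      LowDegreeOfOuterplanar H)
    (hG : Outerplanar G) [Nonempty V] : ∃ x, (G.neighborSet x).ncard < 3 := by
  by_contra! hdeg
  obtain ⟨u⟩ := ‹Nonempty V›
  obtain ⟨v, huv⟩ := Set.nonempty_of_ncard_ne_zero (s := G.neighborSet u)
    (by have := hdeg u; omega)
  rcases Nat.lt_or_ge (G.neighborSet u ∩ G.neighborSet v).ncard 2 with hlt | hge
  · obtain ⟨t, ht⟩ := (Set.ncard_le_one_iff_subset_singleton).mp (Nat.le_of_lt_succ hlt)
    exact (ih _ _ (Finite.card_subtype_lt (not_not.mpr rfl))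
      (hG.of_hasMinor (hasMinor_contract huv))).1 _
      (degreeThreeExceptVertex_contract_of_inter_subset huv hdeg ht)
  obtain ⟨t, t', htt', hC⟩ :=
    Set.ncard_eq_two.mp (le_antisymm (hG.ncard_inter_neighborSet_le_two huv.ne) hge)
  have ht : t ∈ G.neighborSet u ∩ G.neighborSet v := hC ▸ Set.mem_insert _ _
  have ht' : t' ∈ G.neighborSet u ∩ G.neighborSet v := hC ▸ Set.mem_insert_of_mem _ rfl
  -- `u`, `v` and the component of `t` in `G - {u, v}`
  let s : Set V := {x | x = u ∨ x = v ∨ ∃ p : G.Walk t x, u ∉ p.support ∧ v ∉ p.support}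
  have hts : t ∈ s := .inr <| .inr ⟨.nil, by simpa using ⟨ht.1.ne, ht.2.ne⟩⟩
  have ht's : t' ∉ s := by
    rintro (h | h | ⟨p, hpu, hpv⟩)
    · exact ht'.1.ne h.symm
    · exact ht'.2.ne h.symm
    · exact (hG.mem_support_of_common_neighbors huv ht ht' htt' p).elim hpu hpv
  have hclosed : ∀ x ∈ s, x ≠ u → x ≠ v → G.neighborSet x ⊆ s := by
    rintro x (h | h | ⟨p, hpu, hpv⟩) hxu hxv y (hxy : G.Adj x y)
    · exact absurd h hxu
    · exact absurd h hxv
    by_cases hyuv : y = u ∨ y = v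
    · exact hyuv.elim .inl (.inr ∘ .inl)
    obtain ⟨hyu, hyv⟩ := not_or.mp hyuv
    exact .inr <| .inr ⟨p.concat hxy, by simp [Walk.support_concat, hpu, hpv, Ne.symm hyu,
      Ne.symm hyv]⟩
  exact (ih _ _ (Finite.card_subtype_lt ht's) (hG.of_hasMinor (hasMinor_induce s))).2 _ _
    (degreeThreeExceptEdge_induce huv (.inl rfl) (.inr (.inl rfl)) ht hts hclosed
      fun x _ _ => hdeg x)

lemma not_degreeThreeExceptVertex_of_lt
    (ih : ∀ (W : Type u) [Finite W] (H : SimpleGraph W), Nat.card W < Nat.card V →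
      LowDegreeOfOuterplanar H)
    (hG : Outerplanar G) (v : V) : ¬G.DegreeThreeExceptVertex v := by
  rintro ⟨hv₁, hdeg⟩
  have : Nonempty V := ⟨v⟩
  obtain ⟨x, hx₃⟩ := exists_ncard_neighborSet_lt_three_of_lt ih hG
  obtain rfl : x = v := by_contra fun h => (hdeg x h).not_gt hx₃
  obtain ⟨y, hxy⟩ := Set.nonempty_of_ncard_ne_zero (s := G.neighborSet x) (by omega)
  have hcontract := ih _ _ (Finite.card_subtype_lt (not_not.mpr rfl))
    (hG.of_hasMinor (hasMinor_contract hxy.symm))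
  by_cases hcommon : ∃ z, G.Adj x z ∧ G.Adj y z
  · obtain ⟨z, hxz, hyz⟩ := hcommon
    have hN := neighborSet_eq_pair hxy hxz hyz.ne (by omega)
    exact hcontract.2 _ _ (degreeThreeExceptEdge_contract hxy.symm hxz.symm hN.le hyz hdeg)
  · push Not at hcommon
    exact hcontract.1 _ (degreeThreeExceptVertex_contract hxy.symm
      (by have := hdeg y hxy.ne.symm; omega) hcommon fun z _ hzx => hdeg z hzx)

lemma not_degreeThreeExceptEdge_of_lt
    (ih : ∀ (W : Type u) [Finite W] (H : SimpleGraph W), Nat.card W < Nat.card V →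
      LowDegreeOfOuterplanar H)
    (hG : Outerplanar G) (a b : V) : ¬G.DegreeThreeExceptEdge a b := by
  suffices key : ∀ a b, G.DegreeThreeExceptEdge a b → (G.neighborSet a).ncard < 3 → False by
    intro h
    have : Nonempty V := ⟨a⟩
    obtain ⟨x, hx₃⟩ := exists_ncard_neighborSet_lt_three_of_lt ih hG
    by_cases hxa : x = a
    · exact key a b h (hxa ▸ hx₃)
    by_cases hxb : x = b
    · exact key b a h.symm (hxb ▸ hx₃)
    exact (h.2.2.2 x hxa hxb).not_gt hx₃
  rintro a b ⟨hab, ha₂, hb₂, hdeg⟩ ha₃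
  obtain ⟨p, hap, hpb⟩ : ∃ p, G.Adj a p ∧ p ≠ b := by
    have := Set.pred_ncard_le_ncard_sdiff_singleton (G.neighborSet a) b
    obtain ⟨p, hp, hpb⟩ := Set.nonempty_of_ncard_ne_zero (s := G.neighborSet a \ {b}) (by omega)
    exact ⟨p, hp, hpb⟩
  have hNa := neighborSet_eq_pair hab hap hpb.symm (by omega)
  have hp₃ := hdeg p hap.ne.symm hpb
  have hcontract := ih _ _ (Finite.card_subtype_lt (not_not.mpr rfl))
    (hG.of_hasMinor (hasMinor_contract hab.symm))
  by_cases hbp : G.Adj b p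
  · by_cases hb₃ : 3 ≤ (G.neighborSet b).ncard
    · refine hcontract.2 _ _ (degreeThreeExceptEdge_contract hab.symm hap.symm hNa.le hbp
        fun z hza => ?_)
      by_cases hzb : z = b
      exacts [hzb ▸ hb₃, hdeg z hza hzb]
    -- `a`, `b`, `p` span a triangle hanging from `p`
    have hNb := neighborSet_eq_pair hab.symm hbp hap.ne (by omega)
    let s : Set V := {x | x ≠ a ∧ x ≠ b}
    have hps : p ∈ s := ⟨hap.ne.symm, hpb⟩
    refine (ih _ _ (Finite.card_subtype_lt (p := (· ∈ s)) (x := a) fun h => h.1 rfl)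
      (hG.of_hasMinor (hasMinor_induce s))).1 _ (degreeThreeExceptVertex_induce hps ?_ ?_
        fun x hx _ => hdeg x hx.1 hx.2)
    · have hsub : G.neighborSet p \ {a, b} ⊆ G.neighborSet p ∩ s := fun y ⟨hy, hyab⟩ =>
        ⟨hy, fun h => hyab (.inl h), fun h => hyab (.inr h)⟩
      have := Set.ncard_le_ncard_sdiff_add_ncard (G.neighborSet p) {a, b}
      have := Set.ncard_le_ncard hsub
      have := Set.ncard_pair hab.ne
      omega
    · rintro x ⟨hxa, hxb⟩ hxp y (hxy : G.Adj x y)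
      refine ⟨fun hya => ?_, fun hyb => ?_⟩
      · rcases hNa.le (hya ▸ hxy.symm) with h | h
        exacts [hxb h, hxp h]
      · rcases hNb.le (hyb ▸ hxy.symm) with h | h
        exacts [hxa h, hxp h]
  · refine hcontract.1 _ (degreeThreeExceptVertex_contract hab.symm hb₂ (fun z haz hbz => ?_)
      fun z hzb hza => hdeg z hza hzb)
    rcases hNa.le haz with rfl | rfl
    exacts [G.irrefl hbz, hbp hbz]

theorem lowDegreeOfOuterplanar (G : SimpleGraph V) : LowDegreeOfOuterplanar G := by
  induction hn : Nat.card V using Nat.strong_induction_on generalizing V with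
  | _ n ih =>
    have ih' : ∀ (W : Type u) [Finite W] (H : SimpleGraph W), Nat.card W < Nat.card V →
        LowDegreeOfOuterplanar H := fun W _ H hW => ih _ (hn ▸ hW) H rfl
    exact fun hG =>
      ⟨not_degreeThreeExceptVertex_of_lt ih' hG, not_degreeThreeExceptEdge_of_lt ih' hG⟩

theorem Outerplanar.exists_ncard_neighborSet_le_two [Nonempty V] (hG : Outerplanar G) :
    ∃ x, (G.neighborSet x).ncard ≤ 2 :=
  (exists_ncard_neighborSet_lt_three_of_lt (fun _ _ H _ => lowDegreeOfOuterplanar H) hG).imp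
    fun _ => Nat.le_of_lt_succ

end LowDegree

namespace SimpleGraph

variable {α : Type*} {G : SimpleGraph V}

def OppositeOnFourCycle (G : SimpleGraph V) (p q : V) : Prop :=
  p ≠ q ∧ ∃ z₁ z₂, z₁ ≠ z₂ ∧ G.Adj p z₁ ∧ G.Adj p z₂ ∧ G.Adj q z₁ ∧ G.Adj q z₂

lemma OppositeOnFourCycle.symm {p q : V} (h : G.OppositeOnFourCycle p q) :
    G.OppositeOnFourCycle q p :=
  let ⟨hpq, z₁, z₂, h₁₂, hp₁, hp₂, hq₁, hq₂⟩ := h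
  ⟨hpq.symm, z₁, z₂, h₁₂, hq₁, hq₂, hp₁, hp₂⟩

def IsRainbowFourCycleColoring (G : SimpleGraph V) (c : V → α) : Prop :=
  (∀ p q, G.Adj p q → c p ≠ c q) ∧ ∀ p q, G.OppositeOnFourCycle p q → c p ≠ c q

lemma IsRainbowFourCycleColoring.extend [DecidableEq V] {v : V} {H : SimpleGraph {w // w ≠ v}}
    {c : {w // w ≠ v} → α} (hc : H.IsRainbowFourCycleColoring c)
    (hGH : ∀ x y : {w // w ≠ v}, G.Adj x y → H.Adj x y)
    (hN : ∀ x y : {w // w ≠ v}, x ≠ y → G.Adj v x → G.Adj v y → H.Adj x y) {d : α}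
    (hd : ∀ x : {w // w ≠ v}, G.Adj v x ∨ G.OppositeOnFourCycle v x → c x ≠ d) :
    G.IsRainbowFourCycleColoring fun w => if h : w = v then d else c ⟨w, h⟩ := by
  refine ⟨fun p q hpq => ?_, fun p q hpq => ?_⟩
  · rcases eq_or_ne p v with rfl | hp
    · simpa [hpq.ne.symm] using (hd ⟨q, hpq.ne.symm⟩ (.inl hpq)).symm
    rcases eq_or_ne q v with rfl | hq
    · simpa [hp] using hd ⟨p, hp⟩ (.inl hpq.symm)
    simpa [hp, hq] using hc.1 _ _ (hGH ⟨p, hp⟩ ⟨q, hq⟩ hpq)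
  · rcases eq_or_ne p v with rfl | hp
    · simpa [hpq.1.symm] using (hd ⟨q, hpq.1.symm⟩ (.inr hpq)).symm
    rcases eq_or_ne q v with rfl | hq
    · simpa [hp] using hd ⟨p, hp⟩ (.inr hpq.symm)
    simp only [hp, hq, dite_false]
    obtain ⟨hpq, z₁, z₂, h₁₂, hp₁, hp₂, hq₁, hq₂⟩ := hpq
    have hpq' : (⟨p, hp⟩ : {w // w ≠ v}) ≠ ⟨q, hq⟩ := by simpa using hpq
    rcases eq_or_ne z₁ v with rfl | hz₁
    · exact hc.1 _ _ (hN _ _ hpq' hp₁.symm hq₁.symm)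
    rcases eq_or_ne z₂ v with rfl | hz₂
    · exact hc.1 _ _ (hN _ _ hpq' hp₂.symm hq₂.symm)
    exact hc.2 _ _ ⟨hpq', ⟨z₁, hz₁⟩, ⟨z₂, hz₂⟩, by simpa using h₁₂, hGH _ ⟨z₁, hz₁⟩ hp₁,
      hGH _ ⟨z₂, hz₂⟩ hp₂, hGH _ ⟨z₁, hz₁⟩ hq₁, hGH _ ⟨z₂, hz₂⟩ hq₂⟩

end SimpleGraph

lemma exists_forall_ne_of_ncard_lt {α : Type*} [Finite α] {n : ℕ} (f : α → Fin n) {s : Set α}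
    (hs : s.ncard < n) : ∃ d, ∀ x ∈ s, f x ≠ d := by
  by_contra! h
  have himage : f '' s = Set.univ := Set.eq_univ_of_forall fun d => h d
  have := Set.ncard_image_le (f := f) (s := s)
  rw [himage, Set.ncard_univ, Nat.card_fin] at this
  omega

section Coloring

variable {G : SimpleGraph V}

lemma Outerplanar.ncard_adj_or_opposite_le_three [Finite V] (hG : Outerplanar G) {v : V}
    (hv : (G.neighborSet v).ncard ≤ 2) :
    {w | G.Adj v w ∨ G.OppositeOnFourCycle v w}.ncard ≤ 3 := by
  rcases Nat.lt_or_ge (G.neighborSet v).ncard 2 with hv₁ | hv₂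
  · have hsub : {w | G.Adj v w ∨ G.OppositeOnFourCycle v w} ⊆ G.neighborSet v := by
      rintro w (hw | ⟨-, z₁, z₂, h₁₂, h₁, h₂, -⟩)
      · exact hw
      · have := Set.ncard_le_ncard (Set.pair_subset (s := G.neighborSet v) h₁ h₂)
        rw [Set.ncard_pair h₁₂] at this
        omega
    have := Set.ncard_le_ncard hsub
    omega
  obtain ⟨x, y, hxy, hN⟩ := Set.ncard_eq_two.mp (le_antisymm hv hv₂)
  have hsub : {w | G.Adj v w ∨ G.OppositeOnFourCycle v w} ⊆
      {x, y} ∪ (G.neighborSet x ∩ G.neighborSet y) \ {v} := by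
    rintro w (hw | ⟨hvw, z₁, z₂, h₁₂, (h₁ : z₁ ∈ G.neighborSet v),
      (h₂ : z₂ ∈ G.neighborSet v), hw₁, hw₂⟩)
    · exact .inl (hN ▸ hw)
    refine .inr ⟨?_, hvw.symm⟩
    rw [hN] at h₁ h₂
    rcases h₁ with rfl | rfl <;> rcases h₂ with rfl | rfl
    exacts [absurd rfl h₁₂, ⟨hw₁.symm, hw₂.symm⟩, ⟨hw₂.symm, hw₁.symm⟩, absurd rfl h₁₂]
  have hv' : v ∈ G.neighborSet x ∩ G.neighborSet y := by
    have hx : x ∈ G.neighborSet v := hN ▸ Set.mem_insert _ _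
    have hy : y ∈ G.neighborSet v := hN ▸ Set.mem_insert_of_mem _ rfl
    exact ⟨hx.symm, hy.symm⟩
  have := Set.ncard_le_ncard hsub
  have := Set.ncard_union_le {x, y} ((G.neighborSet x ∩ G.neighborSet y) \ {v})
  have := Set.ncard_sdiff_singleton_of_mem hv'
  have := hG.ncard_inter_neighborSet_le_two hxy
  have := Set.ncard_pair hxy
  omega

lemma exists_hasMinor_of_ncard_neighborSet_le_two [Finite V] {v : V}
    (hv : (G.neighborSet v).ncard ≤ 2) :
    ∃ H : SimpleGraph {w // w ≠ v}, HasMinor G H ∧ (∀ x y : {w // w ≠ v}, G.Adj x y → H.Adj x y) ∧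
      ∀ x y : {w // w ≠ v}, x ≠ y → G.Adj v x → G.Adj v y → H.Adj x y := by
  rcases Nat.lt_or_ge (G.neighborSet v).ncard 2 with hv₁ | hv₂
  · refine ⟨G.induce {w | w ≠ v}, hasMinor_induce _, fun x y h => h,
      fun x y hxy hx hy => absurd hv₁ ?_⟩
    have := Set.ncard_le_ncard (Set.pair_subset (s := G.neighborSet v) hx hy)
    rw [Set.ncard_pair (by simpa [Subtype.val_inj] using hxy)] at this
    omega
  obtain ⟨x, y, hxy, hN⟩ := Set.ncard_eq_two.mp (le_antisymm hv hv₂)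
  have hvx : G.Adj v x := (hN ▸ Set.mem_insert _ _ : x ∈ G.neighborSet v)
  have hvy : G.Adj v y := (hN ▸ Set.mem_insert_of_mem _ rfl : y ∈ G.neighborSet v)
  have hH : (G.map (contractMap hvx.symm.ne)).Adj ⟨x, hvx.symm.ne⟩ ⟨y, hvy.symm.ne⟩ :=
    ⟨by simpa using hxy, v, y, hvy, contractMap_right _, contractMap_of_ne _ hvy.symm.ne⟩
  refine ⟨G.map (contractMap hvx.symm.ne), hasMinor_contract hvx.symm,
    fun a b h => G.map_contractMap_adj _ h a.2 b.2, ?_⟩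
  rintro ⟨a, ha⟩ ⟨b, hb⟩ hab (hva : a ∈ G.neighborSet v) (hvb : b ∈ G.neighborSet v)
  rw [hN] at hva hvb
  rcases hva with rfl | rfl <;> rcases hvb with rfl | rfl
  exacts [absurd rfl hab, hH, hH.symm, absurd rfl hab]

theorem Outerplanar.exists_isRainbowFourCycleColoring {V : Type u} [Finite V]
    {G : SimpleGraph V} (hG : Outerplanar G) :
    ∃ c : V → Fin 4, G.IsRainbowFourCycleColoring c := by
  classical
  induction hn : Nat.card V using Nat.strong_induction_on generalizing V with
  | _ n ih =>
  cases isEmpty_or_nonempty V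
  · exact ⟨isEmptyElim, isEmptyElim, isEmptyElim⟩
  obtain ⟨v, hv⟩ := hG.exists_ncard_neighborSet_le_two
  obtain ⟨H, hGH_minor, hGH, hN⟩ := exists_hasMinor_of_ncard_neighborSet_le_two hv
  obtain ⟨c, hc⟩ := ih _ (hn ▸ Finite.card_subtype_lt (not_not.mpr rfl))
    (hG.of_hasMinor hGH_minor) rfl
  have hs : {x : {w // w ≠ v} | G.Adj v x ∨ G.OppositeOnFourCycle v x}.ncard < 4 :=
    (Set.ncard_le_ncard_of_injOn Subtype.val (fun _ hx => hx) Subtype.val_injective.injOn).trans_lt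
      (Nat.lt_succ_of_le (hG.ncard_adj_or_opposite_le_three hv))
  obtain ⟨d, hd⟩ := exists_forall_ne_of_ncard_lt c hs
  exact ⟨_, hc.extend hGH hN hd⟩

end Coloring

end

theorem exists_fourColoring_rainbow_fourCycles_general {V : Type*} [Fintype V]
    (G : SimpleGraph V) (h : MaximalOuterplanar G) :
    ∃ c : V → Fin 4, (∀ u v : V, G.Adj u v → c u ≠ c v) ∧
      ∀ a b d e : V, G.Adj a b → G.Adj b d → G.Adj d e → G.Adj e a →
        a ≠ d → b ≠ e →
        c a ≠ c b ∧ c a ≠ c d ∧ c a ≠ c e ∧ c b ≠ c d ∧ c b ≠ c e ∧ c d ≠ c e := by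
  obtain ⟨c, hadj, hopp⟩ := h.1.exists_isRainbowFourCycleColoring
  refine ⟨c, hadj, fun a b d e hab hbd hde hea had hbe => ⟨hadj _ _ hab, ?_, (hadj _ _ hea).symm,
    hadj _ _ hbd, ?_, hadj _ _ hde⟩⟩
  · exact hopp a d ⟨had, b, e, hbe, hab, hea.symm, hbd.symm, hde⟩
  · exact hopp b e ⟨hbe, a, d, had, hab.symm, hbd, hea, hde.symm⟩

/-- Every maximal outerplanar graph has a proper 4-coloring in
which every 4-cycle receives all four colors. -/
theorem exists_fourColoring_rainbow_fourCycles {V : Type*} [Fintype V] [DecidableEq V]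
    (G : SimpleGraph V) [DecidableRel G.Adj] (h : MaximalOuterplanar G) :
    ∃ c : V → Fin 4, (∀ u v : V, G.Adj u v → c u ≠ c v) ∧
      ∀ a b d e : V, G.Adj a b → G.Adj b d → G.Adj d e → G.Adj e a →
        a ≠ d → b ≠ e →
        c a ≠ c b ∧ c a ≠ c d ∧ c a ≠ c e ∧ c b ≠ c d ∧ c b ≠ c e ∧ c d ≠ c e :=
  exists_fourColoring_rainbow_fourCycles_general G h
end

section
/- Let H be a maximal outerplanar graph on 2k vertices with Hamiltonian outer cycle a_1a_2···a_{2k}, and let G_H be obtained from H by adding k new vertices u_1,…,u_k with u_i adjacent exactly to a_{2i−1} and a_{2i}. Then γ×2(G_H) = 2k = 2|G_H|/3. -/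
open SimpleGraph

/-- The graph `G_H`: `H` together with `k` new vertices `u₀, …, u_{k-1}`,
where `u_j` is adjacent exactly to `a_{2j}` and `a_{2j+1}` (0-indexed). -/
def GH (k : ℕ) (H : SimpleGraph (Fin (2 * k))) :
    SimpleGraph (Fin (2 * k) ⊕ Fin k) :=
  SimpleGraph.fromRel fun x y =>
    match x, y with
    | Sum.inl a, Sum.inl b => H.Adj a b
    | Sum.inl a, Sum.inr u => (a : ℕ) = 2 * (u : ℕ) ∨ (a : ℕ) = 2 * (u : ℕ) + 1
    | _, _ => False

/-
The `k` closed neighborhoods `N[uᵢ] = {uᵢ, a_{2i-1}, a_{2i}}` are pairwise disjoint and each must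
contain two vertices of a double dominating set, so `γ×2(G_H) ≥ 2k`. Conversely the `2k` vertices
of `H` double dominate `G_H`: each `a_j` is dominated by itself and its successor on the outer
cycle, each `uᵢ` by its two neighbors.
-/

namespace IsDoubleDomSet

variable {V : Type*} [Fintype V] [DecidableEq V] {G : SimpleGraph V} [DecidableRel G.Adj]
  {S : Finset V}

theorem of_exists_two (h : ∀ v, ∃ x ∈ S, ∃ y ∈ S, x ≠ y ∧
    (x = v ∨ G.Adj v x) ∧ (y = v ∨ G.Adj v y)) : IsDoubleDomSet G S := by
  intro v
  obtain ⟨x, hxS, y, hyS, hxy, hx, hy⟩ := h v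
  refine Finset.one_lt_card.mpr ⟨x, ?_, y, ?_, hxy⟩ <;> simp [*]

theorem two_mul_card_le {ι : Type*} [Fintype ι] {f : ι → V}
    (hf : Pairwise fun i j =>
      Disjoint (insert (f i) (G.neighborFinset (f i))) (insert (f j) (G.neighborFinset (f j))))
    (hS : IsDoubleDomSet G S) : 2 * Fintype.card ι ≤ S.card := by
  set N : ι → Finset V := fun i => S ∩ insert (f i) (G.neighborFinset (f i))
  have hN : ((Finset.univ : Finset ι) : Set ι).PairwiseDisjoint N := fun i _ j _ hij =>
    (hf hij).mono Finset.inter_subset_right Finset.inter_subset_right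
  calc 2 * Fintype.card ι = ∑ _i : ι, 2 := by simp [mul_comm]
    _ ≤ ∑ i, (N i).card := Finset.sum_le_sum fun i _ => hS (f i)
    _ = (Finset.univ.biUnion N).card := (Finset.card_biUnion hN).symm
    _ ≤ S.card :=
      Finset.card_le_card <| Finset.biUnion_subset.mpr fun _ _ => Finset.inter_subset_left

end IsDoubleDomSet

theorem doubleDomNum_eq_card {V : Type*} [Fintype V] [DecidableEq V] {G : SimpleGraph V}
    [DecidableRel G.Adj] {S : Finset V} (hS : IsDoubleDomSet G S)
    (hmin : ∀ T, IsDoubleDomSet G T → S.card ≤ T.card) : doubleDomNum G = S.card :=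
  le_antisymm (Nat.sInf_le ⟨S, hS, rfl⟩) <|
    le_csInf ⟨_, S, hS, rfl⟩ fun _ ⟨T, hT, hcard⟩ => hcard ▸ hmin T hT

namespace GH

variable {k : ℕ} {H : SimpleGraph (Fin (2 * k))}

theorem adj_inl_inl {a b : Fin (2 * k)} : (GH k H).Adj (.inl a) (.inl b) ↔ H.Adj a b := by
  simp only [GH, fromRel_adj, ne_eq, Sum.inl.injEq]
  exact ⟨fun ⟨_, h⟩ => h.elim id fun h => h.symm, fun h => ⟨h.ne, .inl h⟩⟩

theorem adj_inl_inr {a : Fin (2 * k)} {u : Fin k} :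
    (GH k H).Adj (.inl a) (.inr u) ↔ (a : ℕ) / 2 = u := by
  simp only [GH, fromRel_adj, ne_eq, reduceCtorEq, not_false_eq_true, or_false, true_and]
  omega

theorem not_adj_inr_inr {u v : Fin k} : ¬ (GH k H).Adj (.inr u) (.inr v) := by
  simp [GH]

/-- The index `i` of the block `{a_{2i}, a_{2i+1}, uᵢ}` containing a vertex. -/
def block : Fin (2 * k) ⊕ Fin k → ℕ := Sum.elim (fun a => (a : ℕ) / 2) (fun u => u)

variable [DecidableRel (GH k H).Adj]

theorem block_eq_of_mem_closedNbhd_inr {u : Fin k} {x : Fin (2 * k) ⊕ Fin k}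
    (hx : x ∈ insert (.inr u) ((GH k H).neighborFinset (.inr u))) : block x = u := by
  rcases Finset.mem_insert.mp hx with rfl | hx
  · rfl
  · rw [mem_neighborFinset] at hx
    cases x with
    | inl a => exact adj_inl_inr.mp hx.symm
    | inr v => exact (not_adj_inr_inr hx).elim

theorem pairwise_disjoint_closedNbhd_inr :
    Pairwise fun u v : Fin k => Disjoint
      (insert (.inr u) ((GH k H).neighborFinset (.inr u)))
      (insert (.inr v) ((GH k H).neighborFinset (.inr v))) := by
  intro u v huv
  refine Finset.disjoint_left.mpr fun _ hxu hxv => huv (Fin.ext ?_)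
  rw [← block_eq_of_mem_closedNbhd_inr hxu, ← block_eq_of_mem_closedNbhd_inr hxv]

theorem isDoubleDomSet_image_inl (hH : ∀ a, ∃ b, H.Adj a b) :
    IsDoubleDomSet (GH k H) (Finset.univ.image Sum.inl) := by
  refine IsDoubleDomSet.of_exists_two fun v => ?_
  cases v with
  | inl a =>
    obtain ⟨b, hab⟩ := hH a
    exact ⟨.inl a, by simp, .inl b, by simp, by simpa using hab.ne, .inl rfl,
      .inr (adj_inl_inl.mpr hab)⟩
  | inr u =>
    refine ⟨.inl ⟨2 * u, by omega⟩, by simp, .inl ⟨2 * u + 1, by omega⟩, by simp,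
      by simp [Fin.ext_iff], .inr ?_, .inr ?_⟩ <;>
    exact (adj_inl_inr.mpr (by dsimp only; omega)).symm

end GH

/-- If `H` is maximal outerplanar on `2k` vertices with
Hamiltonian outer cycle `a₀a₁⋯a_{2k-1}` (consecutive vertices adjacent), then
`γ×2(G_H) = 2k = 2|G_H|/3`. -/
theorem doubleDomNum_GH (k : ℕ) (hk : 2 ≤ k) (H : SimpleGraph (Fin (2 * k)))
    (houter : ∀ i : Fin (2 * k),
      H.Adj i ⟨((i : ℕ) + 1) % (2 * k), Nat.mod_lt _ (by omega)⟩) :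
    @doubleDomNum _ _ _ (GH k H) (Classical.decRel _) = 2 * k ∧
    2 * k = 2 * Fintype.card (Fin (2 * k) ⊕ Fin k) / 3 := by
  classical
  have hcard : Fintype.card (Fin (2 * k) ⊕ Fin k) = 3 * k := by
    simp only [Fintype.card_sum, Fintype.card_fin]; omega
  refine ⟨?_, by omega⟩
  have hS := GH.isDoubleDomSet_image_inl fun a => ⟨_, houter a⟩
  have hSc : (Finset.univ.image (Sum.inl : Fin (2 * k) → Fin (2 * k) ⊕ Fin k)).card = 2 * k := by
    simp [Finset.card_image_of_injective _ Sum.inl_injective]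
  refine (doubleDomNum_eq_card hS fun T hT => ?_).trans hSc
  simpa [hSc] using hT.two_mul_card_le GH.pairwise_disjoint_closedNbhd_inr
end

section
/- Every 2-tree on n ≥ 3 vertices admits a proper 3-coloring; consequently, some two color classes together contain at most ⌊2n/3⌋ vertices, and the union of any two color classes of such a coloring is a double dominating set. -/
open SimpleGraph

/-!
A 2-tree is properly 3-colored greedily along its construction: a new vertex sees only the two
ends of an edge, which already carry different colors, so the third color is free. Every vertex
lies in a triangle, and a proper 3-coloring is a bijection from a triangle onto the colors, so
any two color classes meet the triangle, hence the closed neighborhood, in two vertices. Finally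
the three unions of two classes cover every vertex exactly twice, so the smallest has at most
`⌊2n/3⌋` vertices.
-/

open Finset

section

variable {V : Type*}

section Coloring

variable {α : Type*} (G : SimpleGraph V)

def IsProperColoringOn (c : V → α) (s : Finset V) : Prop :=
  ∀ u ∈ s, ∀ w ∈ s, G.Adj u w → c u ≠ c w

variable {G} [DecidableEq V]

lemma IsProperColoringOn.insert_update {c : V → α} {s : Finset V} (hc : IsProperColoringOn G c s)
    {v : V} (hv : v ∉ s) {k : α} (hk : ∀ u ∈ s, G.Adj v u → c u ≠ k) :
    IsProperColoringOn G (Function.update c v k) (insert v s) := by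
  have hupd : ∀ u ∈ s, Function.update c v k u = c u := fun u hu =>
    Function.update_of_ne (ne_of_mem_of_not_mem hu hv) _ _
  intro u hu w hw huw
  rcases mem_insert.mp hu with rfl | hus <;> rcases mem_insert.mp hw with rfl | hws
  · exact absurd huw (G.loopless.irrefl _)
  · rw [Function.update_self, hupd w hws]
    exact (hk w hws huw).symm
  · rw [Function.update_self, hupd u hus]
    exact hk u hus huw.symm
  · rw [hupd u hus, hupd w hws]
    exact hc u hus w hws huw

lemma IsProperColoringOn.card_le_card_inter_of_isNClique [Fintype V] [Fintype α] [DecidableEq α]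
    {c : V → α} {T : Finset V} (hc : IsProperColoringOn G c T)
    (hT : G.IsNClique (Fintype.card α) T) (A : Finset α) :
    #A ≤ #(({v | c v ∈ A} : Finset V) ∩ T) := by
  have hinj : Set.InjOn c T := fun u hu w hw hcuw => by
    by_contra hne
    exact hc u hu w hw (hT.isClique hu hw hne) hcuw
  have himage : T.image c = univ :=
    eq_univ_of_card _ ((card_image_of_injOn hinj).trans hT.card_eq)
  refine card_le_card_of_surjOn c fun a ha => ?_
  obtain ⟨v, hvT, rfl⟩ := mem_image.mp (himage ▸ mem_univ a : a ∈ T.image c)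
  exact ⟨v, by simpa [hvT] using ha, rfl⟩

end Coloring

lemma exists_card_filter_ne_mul_le {α : Type*} [Fintype V] [Fintype α] [DecidableEq α]
    [Nonempty α] (c : V → α) :
    ∃ a, Fintype.card α * #{v | c v ≠ a} ≤ (Fintype.card α - 1) * Fintype.card V := by
  have hsum : ∑ a : α, #{v | c v ≠ a} = ∑ _v : V, (Fintype.card α - 1) := by
    have := sum_card_bipartiteAbove_eq_sum_card_bipartiteBelow (fun a v => c v ≠ a)
      (s := univ) (t := univ)
    simp only [bipartiteAbove, bipartiteBelow] at this
    refine this.trans (sum_congr rfl fun v _ => ?_)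
    rw [filter_ne, card_erase_of_mem (mem_univ _), card_univ]
  obtain ⟨a, -, ha⟩ := exists_le_of_sum_le (f := fun a => Fintype.card α * #{v | c v ≠ a})
    (g := fun _ => (Fintype.card α - 1) * Fintype.card V) univ_nonempty (by
      rw [← mul_sum, hsum]
      simp only [sum_const, card_univ, smul_eq_mul]
      exact (by ring : _ = _).le)
  exact ⟨a, ha⟩

lemma SimpleGraph.subset_insert_neighborFinset_of_isClique [Fintype V] [DecidableEq V]
    {G : SimpleGraph V} [DecidableRel G.Adj] {T : Finset V} (hT : G.IsClique (T : Set V))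
    {v : V} (hv : v ∈ T) : T ⊆ insert v (G.neighborFinset v) := fun u hu => by
  by_cases huv : u = v
  · exact huv ▸ mem_insert_self _ _
  · exact mem_insert_of_mem ((G.mem_neighborFinset v u).mpr (hT hv hu (Ne.symm huv)))

namespace IsTwoTreeOn

variable [DecidableEq V] {G : SimpleGraph V} {s : Finset V}

lemma exists_isProperColoringOn (h : IsTwoTreeOn G s) :
    ∃ c : V → Fin 3, IsProperColoringOn G c s := by
  induction h with
  | @triangle a b c hab hac hbc h1 h2 h3 =>
    refine ⟨fun v => if v = a then 0 else if v = b then 1 else 2, ?_⟩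
    intro u hu v hv huv
    simp only [mem_insert, mem_singleton] at hu hv
    rcases hu with rfl | rfl | rfl <;> rcases hv with rfl | rfl | rfl <;>
      simp_all [hab.symm, hac.symm, hbc.symm]
  | @grow s x y v _ _ _ _ hv hadj ih =>
    obtain ⟨c, hc⟩ := ih
    obtain ⟨k, hkx, hky⟩ := (by decide : ∀ a b : Fin 3, ∃ k, a ≠ k ∧ b ≠ k) (c x) (c y)
    refine ⟨Function.update c v k, hc.insert_update hv fun u hu hvu => ?_⟩
    rcases (hadj u hu).mp hvu with rfl | rfl
    exacts [hkx, hky]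

lemma exists_isNClique_three (h : IsTwoTreeOn G s) {v : V} (hv : v ∈ s) :
    ∃ T : Finset V, G.IsNClique 3 T ∧ v ∈ T := by
  induction h with
  | triangle _ _ _ h1 h2 h3 => exact ⟨_, is3Clique_triple_iff.mpr ⟨h1, h2, h3⟩, hv⟩
  | @grow s x y w _ hx hy hxy _ hadj ih =>
    rcases mem_insert.mp hv with rfl | hv
    · exact ⟨{v, x, y}, is3Clique_triple_iff.mpr
        ⟨(hadj x hx).mpr (Or.inl rfl), (hadj y hy).mpr (Or.inr rfl), hxy⟩, mem_insert_self _ _⟩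
    · exact ih hv

end IsTwoTreeOn

end

theorem twoTree_threeColoring_doubleDom_general {V : Type*} [Fintype V] [DecidableEq V]
    (G : SimpleGraph V) [DecidableRel G.Adj] (h : IsTwoTree G) :
    (∃ c : V → Fin 3, ∀ u v : V, G.Adj u v → c u ≠ c v) ∧
    ∀ c : V → Fin 3, (∀ u v : V, G.Adj u v → c u ≠ c v) →
      (∃ i j : Fin 3, i ≠ j ∧
        (Finset.univ.filter fun v => c v = i ∨ c v = j).card ≤
          2 * Fintype.card V / 3) ∧
      ∀ i j : Fin 3, i ≠ j →
        IsDoubleDomSet G (Finset.univ.filter fun v => c v = i ∨ c v = j) := by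
  refine ⟨?_, fun c hc => ⟨?_, fun i j hij v => ?_⟩⟩
  · obtain ⟨c, hc⟩ := h.exists_isProperColoringOn
    exact ⟨c, fun u v => hc u (mem_univ u) v (mem_univ v)⟩
  · obtain ⟨k, hk⟩ := exists_card_filter_ne_mul_le c
    obtain ⟨i, j, hij, hne⟩ :=
      (by decide : ∀ k : Fin 3, ∃ i j, i ≠ j ∧ ∀ a, a ≠ k ↔ a = i ∨ a = j) k
    refine ⟨i, j, hij, (Nat.le_div_iff_mul_le three_pos).mpr ?_⟩
    simp only [← hne, Fintype.card_fin] at hk ⊢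
    linarith
  · obtain ⟨T, hT, hvT⟩ := h.exists_isNClique_three (mem_univ v)
    have hcT : IsProperColoringOn G c T := fun u _ w _ => hc u w
    calc 2 = #{i, j} := (card_pair hij).symm
      _ ≤ #(({w | c w ∈ ({i, j} : Finset (Fin 3))} : Finset V) ∩ T) :=
        hcT.card_le_card_inter_of_isNClique (by simpa using hT) _
      _ ≤ _ := by
        simp only [mem_insert, mem_singleton]
        exact card_le_card (inter_subset_inter_left
          (subset_insert_neighborFinset_of_isClique hT.isClique hvT))

/-- Every 2-tree on `n ≥ 3` vertices has a proper 3-coloring;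
for any such coloring some two color classes together have at most `⌊2n/3⌋`
vertices, and the union of any two color classes is a double dominating set. -/
theorem twoTree_threeColoring_doubleDom {V : Type*} [Fintype V] [DecidableEq V]
    (G : SimpleGraph V) [DecidableRel G.Adj] (h : IsTwoTree G)
    (hn : 3 ≤ Fintype.card V) :
    (∃ c : V → Fin 3, ∀ u v : V, G.Adj u v → c u ≠ c v) ∧
    ∀ c : V → Fin 3, (∀ u v : V, G.Adj u v → c u ≠ c v) →
      (∃ i j : Fin 3, i ≠ j ∧
        (Finset.univ.filter fun v => c v = i ∨ c v = j).card ≤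
          2 * Fintype.card V / 3) ∧
      ∀ i j : Fin 3, i ≠ j →
        IsDoubleDomSet G (Finset.univ.filter fun v => c v = i ∨ c v = j) :=
  twoTree_threeColoring_doubleDom_general G h
end
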